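/- Monotone fixed-point theorem for pushforward: let f : X ⇢ X be a continuous open-dense defined selfmap of a compact metric space and μ₀ a positive strong submeasure with f_*(μ₀) ≤ μ₀ (pointwise on C⁰(X)). Then the sequence (f_*)ⁿ(μ₀) is non-increasing, its pointwise limit μ_∞ exists, is a positive strong submeasure, satisfies f_*(μ_∞) = μ_∞, and is the largest element of {μ ∈ SM⁺(X) : μ ≤ μ₀, f_*(μ) = μ}. -/

import Mathlib

open Filter Topology
open scoped Classical

/-- A strong submeasure on a compact metric space `X`: a sublinear and bounded
functional on `C(X, ℝ)`. -/
def IsStrongSubmeasure {X : Type*} [TopologicalSpace X] [CompactSpace X] (μ : C(X, ℝ) → ℝ) : Prop :=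
  (∀ φ ψ : C(X, ℝ), μ (φ + ψ) ≤ μ φ + μ ψ) ∧
  (∀ c : ℝ, 0 ≤ c → ∀ φ : C(X, ℝ), μ (c • φ) = c * μ φ) ∧
  (∃ C : ℝ, 0 < C ∧ ∀ φ : C(X, ℝ), |μ φ| ≤ C * ‖φ‖)

/-- The canonical extension of a function from a dense open set `U` to `X`:
equal to the function on `U`, and to its `limsup` within `U` outside `U`. -/
noncomputable def usce {X : Type*} [TopologicalSpace X] (U : Set X) (g : X → ℝ) : X → ℝ :=
  fun x => if x ∈ U then g x else Filter.limsup g (nhdsWithin x U)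

/-- The upper-semicontinuous pullback `f^*(φ)` of a continuous function `φ` by a map `f`
continuous on the dense open set `U`: the USC extension of `φ ∘ f` from `U`. -/
noncomputable def uscPullback {X Y : Type*} [TopologicalSpace X] [TopologicalSpace Y]
    (U : Set X) (f : X → Y) (φ : C(Y, ℝ)) : X → ℝ :=
  usce U (fun x => φ (f x))

/-- The pushforward `f_*(μ)` of a functional `μ` on `C(X, ℝ)` by a continuous
open-dense defined map: `f_*(μ)(φ) = inf {μ(ψ) : ψ ∈ C⁰(X), ψ ≥ f^*(φ)}`. -/
noncomputable def pushSM {X Y : Type*} [TopologicalSpace X] [CompactSpace X]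
    [TopologicalSpace Y] [CompactSpace Y] (U : Set X) (f : X → Y)
    (μ : C(X, ℝ) → ℝ) (φ : C(Y, ℝ)) : ℝ :=
  sInf {c : ℝ | ∃ ψ : C(X, ℝ), (∀ x, uscPullback U f φ x ≤ ψ x) ∧ μ ψ = c}


section Aux
set_option linter.unusedSectionVars false
variable {X : Type*} [MetricSpace X] [CompactSpace X] [Nonempty X]
variable {U : Set X} {f : X → X}

lemma SMaux.abs_apply_le (φ : C(X, ℝ)) (x : X) : |φ x| ≤ ‖φ‖ := by
  simpa [Real.norm_eq_abs] using φ.norm_coe_le_norm x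

lemma SMaux.neBot (hUd : Dense U) (x : X) : (nhdsWithin x U).NeBot :=
  mem_closure_iff_nhdsWithin_neBot.mp (hUd x)

lemma SMaux.uscPullback_le (hUd : Dense U) {φ χ : C(X, ℝ)}
    (h : ∀ x ∈ U, φ (f x) ≤ χ x) (x : X) : uscPullback U f φ x ≤ χ x := by
  unfold uscPullback usce
  split_ifs with hx
  · exact h x hx
  · haveI := SMaux.neBot hUd x
    have hle : (fun y => φ (f y)) ≤ᶠ[nhdsWithin x U] fun y => χ y :=
      eventually_nhdsWithin_of_forall h
    have hcob : Filter.IsCoboundedUnder (· ≤ ·) (nhdsWithin x U) (fun y => φ (f y)) :=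
      isCoboundedUnder_le_of_eventually_le _
        (Filter.Eventually.of_forall fun y => (abs_le.mp (SMaux.abs_apply_le φ (f y))).1)
    have hbdd : Filter.IsBoundedUnder (· ≤ ·) (nhdsWithin x U) (fun y => χ y) :=
      Filter.isBoundedUnder_of ⟨‖χ‖, fun y => (abs_le.mp (SMaux.abs_apply_le χ y)).2⟩
    have hχ : Filter.Tendsto (fun y => χ y) (nhdsWithin x U) (nhds (χ x)) :=
      (χ.continuous.tendsto x).mono_left nhdsWithin_le_nhds
    calc Filter.limsup (fun y => φ (f y)) (nhdsWithin x U)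
        ≤ Filter.limsup (fun y => χ y) (nhdsWithin x U) := limsup_le_limsup hle hcob hbdd
      _ = χ x := hχ.limsup_eq

lemma SMaux.le_uscPullback (hUd : Dense U) (φ : C(X, ℝ)) (x : X) :
    -‖φ‖ ≤ uscPullback U f φ x := by
  unfold uscPullback usce
  split_ifs with hx
  · exact (abs_le.mp (SMaux.abs_apply_le φ (f x))).1
  · haveI := SMaux.neBot hUd x
    exact le_limsup_of_frequently_le
      (Filter.Eventually.of_forall fun y => (abs_le.mp (SMaux.abs_apply_le φ (f y))).1).frequently
      (Filter.isBoundedUnder_of ⟨‖φ‖, fun y => (abs_le.mp (SMaux.abs_apply_le φ (f y))).2⟩)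

lemma SMaux.uscPullback_le_norm (hUd : Dense U) (φ : C(X, ℝ)) (x : X) :
    uscPullback U f φ x ≤ ‖φ‖ := by
  simpa using SMaux.uscPullback_le hUd (χ := ContinuousMap.const X ‖φ‖)
    (fun y _ => (abs_le.mp (SMaux.abs_apply_le φ (f y))).2) x

end Aux


def SMGood {X : Type*} [TopologicalSpace X] [CompactSpace X] (C : ℝ) (μ : C(X, ℝ) → ℝ) : Prop :=
  Monotone μ ∧ (∀ φ ψ : C(X, ℝ), μ (φ + ψ) ≤ μ φ + μ ψ) ∧
  (∀ c : ℝ, 0 ≤ c → ∀ φ : C(X, ℝ), μ (c • φ) = c * μ φ) ∧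
  (∀ φ : C(X, ℝ), |μ φ| ≤ C * ‖φ‖)

section Aux2
set_option linter.unusedSectionVars false
variable {X : Type*} [MetricSpace X] [CompactSpace X] [Nonempty X]
variable {U : Set X} {f : X → X} {C : ℝ} {μ ν : C(X, ℝ) → ℝ}

/-- the defining set of `pushSM`. -/
def SMset (U : Set X) (f : X → X) (μ : C(X, ℝ) → ℝ) (φ : C(X, ℝ)) : Set ℝ :=
  {c : ℝ | ∃ ψ : C(X, ℝ), (∀ x, uscPullback U f φ x ≤ ψ x) ∧ μ ψ = c}

lemma SMaux.pushSM_def (μ : C(X, ℝ) → ℝ) (φ : C(X, ℝ)) :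
    pushSM U f μ φ = sInf (SMset U f μ φ) := rfl

lemma SMaux.norm_const_le (c : ℝ) : ‖ContinuousMap.const X c‖ ≤ |c| :=
  (ContinuousMap.norm_le _ (abs_nonneg c)).mpr fun x => by simp [Real.norm_eq_abs]

lemma SMaux.SMset_nonempty (hUd : Dense U) (μ : C(X, ℝ) → ℝ) (φ : C(X, ℝ)) :
    (SMset U f μ φ).Nonempty :=
  ⟨μ (ContinuousMap.const X ‖φ‖), ContinuousMap.const X ‖φ‖,
    fun x => by simpa using SMaux.uscPullback_le_norm hUd φ x, rfl⟩

lemma SMaux.mem_lowerBounds_SMset (hUd : Dense U) (hC : 0 ≤ C) (hμ : SMGood C μ)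
    (φ : C(X, ℝ)) : -(C * ‖φ‖) ∈ lowerBounds (SMset U f μ φ) := by
  rintro c ⟨ψ, hψ, rfl⟩
  have h1 : ContinuousMap.const X (-‖φ‖) ≤ ψ := ContinuousMap.le_def.mpr fun x => by
    simpa using (SMaux.le_uscPullback hUd φ x).trans (hψ x)
  have h2 : μ (ContinuousMap.const X (-‖φ‖)) ≤ μ ψ := hμ.1 h1
  have h3 : |μ (ContinuousMap.const X (-‖φ‖))| ≤ C * ‖φ‖ := by
    refine (hμ.2.2.2 _).trans ?_
    have := SMaux.norm_const_le (X := X) (-‖φ‖)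
    rw [abs_neg, abs_norm] at this
    nlinarith
  linarith [neg_abs_le (μ (ContinuousMap.const X (-‖φ‖)))]

lemma SMaux.bddBelow_SMset (hUd : Dense U) (hC : 0 ≤ C) (hμ : SMGood C μ) (φ : C(X, ℝ)) :
    BddBelow (SMset U f μ φ) :=
  ⟨_, SMaux.mem_lowerBounds_SMset hUd hC hμ φ⟩

lemma SMaux.pushSM_le (hUd : Dense U) (hC : 0 ≤ C) (hμ : SMGood C μ) {φ ψ : C(X, ℝ)}
    (hψ : ∀ x ∈ U, φ (f x) ≤ ψ x) : pushSM U f μ φ ≤ μ ψ :=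
  csInf_le (SMaux.bddBelow_SMset hUd hC hμ φ) ⟨ψ, SMaux.uscPullback_le hUd hψ, rfl⟩

lemma SMaux.le_pushSM (hUd : Dense U) {φ : C(X, ℝ)} {a : ℝ}
    (h : ∀ ψ : C(X, ℝ), (∀ x, uscPullback U f φ x ≤ ψ x) → a ≤ μ ψ) :
    a ≤ pushSM U f μ φ :=
  le_csInf (SMaux.SMset_nonempty hUd μ φ) (by rintro c ⟨ψ, hψ, rfl⟩; exact h ψ hψ)

lemma SMaux.on_U_le {φ ψ : C(X, ℝ)} (hψ : ∀ x, uscPullback U f φ x ≤ ψ x) :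
    ∀ x ∈ U, φ (f x) ≤ ψ x := fun x hx => by
  have := hψ x
  rwa [uscPullback, usce, if_pos hx] at this

lemma SMaux.pushSM_mono_meas (hUd : Dense U) (hC : 0 ≤ C) (hμ : SMGood C μ)
    (h : ∀ φ, μ φ ≤ ν φ) (φ : C(X, ℝ)) : pushSM U f μ φ ≤ pushSM U f ν φ :=
  le_csInf (SMaux.SMset_nonempty hUd ν φ) (by
    rintro c ⟨ψ, hψ, rfl⟩
    exact (csInf_le (SMaux.bddBelow_SMset hUd hC hμ φ) ⟨ψ, hψ, rfl⟩).trans (h ψ))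

lemma SMGood.push (hUd : Dense U) (hC : 0 ≤ C) (hμ : SMGood C μ) :
    SMGood C (pushSM U f μ) := by
  obtain ⟨hm, hadd, hhom, hb⟩ := hμ
  refine ⟨?_, ?_, ?_, ?_⟩
  · -- Monotone
    intro φ₁ φ₂ h12
    refine SMaux.le_pushSM hUd fun ψ hψ => ?_
    exact SMaux.pushSM_le hUd hC ⟨hm, hadd, hhom, hb⟩
      fun x hx => (h12 (f x)).trans (SMaux.on_U_le hψ x hx)
  · -- subadditive
    intro φ ψ
    have key : ∀ χ₁ : C(X, ℝ), (∀ x, uscPullback U f φ x ≤ χ₁ x) →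
        ∀ χ₂ : C(X, ℝ), (∀ x, uscPullback U f ψ x ≤ χ₂ x) →
        pushSM U f μ (φ + ψ) ≤ μ χ₁ + μ χ₂ := by
      intro χ₁ h₁ χ₂ h₂
      refine (SMaux.pushSM_le hUd hC ⟨hm, hadd, hhom, hb⟩ (ψ := χ₁ + χ₂) fun x hx => ?_).trans
        (hadd χ₁ χ₂)
      simpa using add_le_add (SMaux.on_U_le h₁ x hx) (SMaux.on_U_le h₂ x hx)
    have h2 : ∀ χ₂ : C(X, ℝ), (∀ x, uscPullback U f ψ x ≤ χ₂ x) →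
        pushSM U f μ (φ + ψ) - μ χ₂ ≤ pushSM U f μ φ := by
      intro χ₂ h₂
      refine SMaux.le_pushSM hUd fun χ₁ h₁ => ?_
      linarith [key χ₁ h₁ χ₂ h₂]
    have h3 : pushSM U f μ (φ + ψ) - pushSM U f μ φ ≤ pushSM U f μ ψ := by
      refine SMaux.le_pushSM hUd fun χ₂ h₂ => ?_
      linarith [h2 χ₂ h₂]
    linarith
  · -- homogeneity
    intro c hc φ
    rcases hc.eq_or_lt with h0 | hcpos
    · subst h0
      rw [zero_smul, zero_mul]
      have hμ0 : μ 0 = 0 := by simpa using hhom 0 le_rfl 0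
      refine le_antisymm ?_ ?_
      · refine csInf_le (SMaux.bddBelow_SMset hUd hC ⟨hm, hadd, hhom, hb⟩ 0) ⟨0, fun x => ?_, hμ0⟩
        simpa using SMaux.uscPullback_le_norm hUd (0 : C(X, ℝ)) x
      · refine SMaux.le_pushSM hUd fun ψ hψ => ?_
        have hψ0 : (0 : C(X, ℝ)) ≤ ψ := ContinuousMap.le_def.mpr fun x => by
          have := (SMaux.le_uscPullback hUd (0 : C(X, ℝ)) x).trans (hψ x)
          simpa using this
        have := hm hψ0
        rw [hμ0] at this
        simpa using this
    · refine le_antisymm ?_ ?_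
      · -- pushSM (c•φ) ≤ c * pushSM φ
        have hA : ∀ χ : C(X, ℝ), (∀ x, uscPullback U f φ x ≤ χ x) →
            pushSM U f μ (c • φ) / c ≤ μ χ := by
          intro χ hχ
          have : pushSM U f μ (c • φ) ≤ μ (c • χ) :=
            SMaux.pushSM_le hUd hC ⟨hm, hadd, hhom, hb⟩ fun x hx => by
              simpa [smul_eq_mul] using
                mul_le_mul_of_nonneg_left (SMaux.on_U_le hχ x hx) hcpos.le
          rw [hhom c hcpos.le χ] at this
          rw [div_le_iff₀ hcpos]
          linarith [this, mul_comm c (μ χ)]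
        have := SMaux.le_pushSM hUd (a := pushSM U f μ (c • φ) / c) hA
        calc pushSM U f μ (c • φ) = c * (pushSM U f μ (c • φ) / c) := by
              field_simp
          _ ≤ c * pushSM U f μ φ := by nlinarith
      · -- c * pushSM φ ≤ pushSM (c•φ)
        refine SMaux.le_pushSM hUd fun χ hχ => ?_
        have hadm : ∀ x ∈ U, φ (f x) ≤ (c⁻¹ • χ) x := fun x hx => by
          have h1 := SMaux.on_U_le hχ x hx
          simp only [ContinuousMap.smul_apply, smul_eq_mul] at h1 ⊢
          rw [le_inv_mul_iff₀ hcpos]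
          linarith
        have h2 : pushSM U f μ φ ≤ μ (c⁻¹ • χ) :=
          SMaux.pushSM_le hUd hC ⟨hm, hadd, hhom, hb⟩ hadm
        rw [hhom c⁻¹ (by positivity) χ] at h2
        rw [← mul_le_mul_iff_right₀ hcpos] at h2
        calc c * pushSM U f μ φ ≤ c * (c⁻¹ * μ χ) := h2
          _ = μ χ := by field_simp
  · -- bound
    intro φ
    rw [abs_le]
    constructor
    · exact le_csInf (SMaux.SMset_nonempty hUd μ φ)
        (SMaux.mem_lowerBounds_SMset hUd hC ⟨hm, hadd, hhom, hb⟩ φ)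
    · have h1 : pushSM U f μ φ ≤ μ (ContinuousMap.const X ‖φ‖) :=
        SMaux.pushSM_le hUd hC ⟨hm, hadd, hhom, hb⟩ fun x hx => by
          simpa using (abs_le.mp (SMaux.abs_apply_le φ (f x))).2
      have h2 : |μ (ContinuousMap.const X ‖φ‖)| ≤ C * ‖φ‖ := by
        refine (hb _).trans ?_
        have := SMaux.norm_const_le (X := X) ‖φ‖
        rw [abs_norm] at this
        nlinarith
      linarith [le_abs_self (μ (ContinuousMap.const X ‖φ‖))]

end Aux2

/-- Monotone fixed-point theorem for pushforward: if `f : X ⇢ X` is a continuous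
open-dense defined selfmap and `μ₀` is a positive strong submeasure with
`f_*(μ₀) ≤ μ₀`, then the iterates `(f_*)ⁿ(μ₀)` are non-increasing, converge pointwise
to a positive strong submeasure `μ_∞` with `f_*(μ_∞) = μ_∞`, and `μ_∞` is the largest
element of `{μ ∈ SM⁺(X) : μ ≤ μ₀, f_*(μ) = μ}`. -/
theorem pushSM_fixed_point {X : Type*} [MetricSpace X] [CompactSpace X] [Nonempty X]
    (U : Set X) (hU : IsOpen U) (hUd : Dense U) (f : X → X) (hf : ContinuousOn f U)
    (μ₀ : C(X, ℝ) → ℝ) (hμ₀ : IsStrongSubmeasure μ₀) (hmono : Monotone μ₀)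
    (hdec : ∀ φ : C(X, ℝ), pushSM U f μ₀ φ ≤ μ₀ φ) :
    (∀ (n : ℕ) (φ : C(X, ℝ)), (pushSM U f)^[n + 1] μ₀ φ ≤ (pushSM U f)^[n] μ₀ φ) ∧
    ∃ μinf : C(X, ℝ) → ℝ,
      (∀ φ : C(X, ℝ),
        Filter.Tendsto (fun n => (pushSM U f)^[n] μ₀ φ) Filter.atTop (nhds (μinf φ))) ∧
      IsStrongSubmeasure μinf ∧ Monotone μinf ∧
      (∀ φ : C(X, ℝ), μinf φ ≤ μ₀ φ) ∧
      (∀ φ : C(X, ℝ), pushSM U f μinf φ = μinf φ) ∧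
      (∀ ν : C(X, ℝ) → ℝ, IsStrongSubmeasure ν → Monotone ν →
        (∀ φ, ν φ ≤ μ₀ φ) → (∀ φ, pushSM U f ν φ = ν φ) → ∀ φ, ν φ ≤ μinf φ) := by
  obtain ⟨hadd₀, hhom₀, C, hCpos, hCb⟩ := hμ₀
  have hC : (0 : ℝ) ≤ C := hCpos.le
  set T := pushSM U f with hT
  set μn : ℕ → C(X, ℝ) → ℝ := fun n => T^[n] μ₀ with hμn
  have hiter : ∀ n, μn (n + 1) = T (μn n) := fun n => Function.iterate_succ_apply' T n μ₀
  -- all iterates are good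
  have hGood : ∀ n, SMGood C (μn n) := by
    intro n
    induction n with
    | zero => exact ⟨hmono, hadd₀, hhom₀, hCb⟩
    | succ n ih => rw [hiter n]; exact SMGood.push hUd hC ih
  -- step decrease
  have hstep : ∀ n (φ : C(X, ℝ)), μn (n + 1) φ ≤ μn n φ := by
    intro n
    induction n with
    | zero => intro φ; simpa [μn] using hdec φ
    | succ n ih =>
      intro φ
      have h1 : SMGood C (T (μn n)) := by rw [← hiter n]; exact hGood (n + 1)
      have h2 : ∀ ψ, T (μn n) ψ ≤ μn n ψ := fun ψ => by rw [← hiter n]; exact ih ψ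
      rw [hiter (n + 1), hiter n]
      exact SMaux.pushSM_mono_meas hUd hC h1 h2 φ
  have hAnti : ∀ φ : C(X, ℝ), Antitone fun n => μn n φ :=
    fun φ => antitone_nat_of_succ_le fun n => hstep n φ
  have hbddB : ∀ φ : C(X, ℝ), BddBelow (Set.range fun n => μn n φ) := by
    intro φ
    refine ⟨-(C * ‖φ‖), ?_⟩
    rintro _ ⟨n, rfl⟩
    linarith [neg_abs_le (μn n φ), (hGood n).2.2.2 φ]
  set μinf : C(X, ℝ) → ℝ := fun φ => ⨅ n, μn n φ with hμinf
  have htend : ∀ φ : C(X, ℝ), Filter.Tendsto (fun n => μn n φ) Filter.atTop (nhds (μinf φ)) :=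
    fun φ => tendsto_atTop_ciInf (hAnti φ) (hbddB φ)
  have hle : ∀ n (φ : C(X, ℝ)), μinf φ ≤ μn n φ := fun n φ => ciInf_le (hbddB φ) n
  have hGoodInf : SMGood C μinf := by
    refine ⟨?_, ?_, ?_, ?_⟩
    · intro φ ψ h
      exact ciInf_mono (hbddB φ) fun n => (hGood n).1 h
    · intro φ ψ
      exact le_of_tendsto_of_tendsto' (htend (φ + ψ)) ((htend φ).add (htend ψ))
        fun n => (hGood n).2.1 φ ψ
    · intro c hc φ
      refine tendsto_nhds_unique (htend (c • φ)) ?_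
      have := (htend φ).const_mul c
      exact this.congr fun n => ((hGood n).2.2.1 c hc φ).symm
    · intro φ
      exact le_of_tendsto' (htend φ).abs fun n => (hGood n).2.2.2 φ
  have hinfle : ∀ φ : C(X, ℝ), μinf φ ≤ μ₀ φ := fun φ => hle 0 φ
  have hfix : ∀ φ : C(X, ℝ), T μinf φ = μinf φ := by
    intro φ
    refine le_antisymm ?_ ?_
    · refine le_ciInf fun m => ?_
      calc T μinf φ ≤ T (μn m) φ :=
            SMaux.pushSM_mono_meas hUd hC hGoodInf (hle m) φ
        _ = μn (m + 1) φ := by rw [hiter m]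
        _ ≤ μn m φ := hstep m φ
    · refine SMaux.le_pushSM hUd fun ψ hψ => ?_
      refine le_ciInf fun n => ?_
      calc μinf φ ≤ μn (n + 1) φ := hle (n + 1) φ
        _ ≤ μn n ψ := by
            rw [hiter n]
            exact csInf_le (SMaux.bddBelow_SMset hUd hC (hGood n) φ) ⟨ψ, hψ, rfl⟩
  refine ⟨fun n φ => hstep n φ, μinf, htend, ⟨hGoodInf.2.1, hGoodInf.2.2.1, C, hCpos,
    hGoodInf.2.2.2⟩, hGoodInf.1, hinfle, hfix, ?_⟩
  intro ν hν hνmono hνle hνfix φ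
  obtain ⟨hνadd, hνhom, D, hDpos, hDb⟩ := hν
  have hνGood : SMGood D ν := ⟨hνmono, hνadd, hνhom, hDb⟩
  have hνn : ∀ n (φ : C(X, ℝ)), ν φ ≤ μn n φ := by
    intro n
    induction n with
    | zero => exact hνle
    | succ n ih =>
      intro φ
      calc ν φ = T ν φ := (hνfix φ).symm
        _ ≤ T (μn n) φ := SMaux.pushSM_mono_meas hUd hDpos.le hνGood ih φ
        _ = μn (n + 1) φ := (congrFun (hiter n) φ).symm
  exact le_ciInf fun n => hνn n φ
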